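/- arXiv:1310.8025 — 2 statements merged into one kernel-verified Lean document; each statement's English description precedes it below -/
import Mathlib

section
/- For k ≥ 1, λ a positive integer, and n ≥ 0, the order-k Boole polynomials satisfy 2^k Bl_n^{(k)}(x|λ) = ∑_{l=0}^{n} s(n,l) λ^l E_l^{(k)}(x/λ). -/
/-!
Substituting `t ↦ L log(1 + t)` is a ring homomorphism of power series. Since
`(log(1 + t))^l / l! = ∑ s(n,l) t^n / n!` (both sides solve the same differential recursion,
coming from `(1 + t) (log(1 + t))' = 1`) and `∑ s(n,l) z^l = z(z - 1)⋯(z - n + 1)`, it sends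
`e^{yt}` to `(1 + t)^{yL}`, in particular `e^t` to `(1 + t)^L`. Applied to the generating
function of `E^{(k)}(x/L)` it therefore produces that of `2^k Bl^{(k)}(x|L)`, and the
coefficients of the substituted series are `∑ s(n,l) L^l E_l^{(k)}(x/L) / n!`.
-/

open Finset PowerSeries

/-- Stirling numbers of the second kind. -/
def stirling2 : ℕ → ℕ → ℕ
  | 0, 0 => 1
  | 0, _ + 1 => 0
  | _ + 1, 0 => 0
  | n + 1, k + 1 => (k + 1) * stirling2 n (k + 1) + stirling2 n k

/-- Unsigned Stirling numbers of the first kind. -/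
def stirling1 : ℕ → ℕ → ℕ
  | 0, 0 => 1
  | 0, _ + 1 => 0
  | _ + 1, 0 => 0
  | n + 1, k + 1 => n * stirling1 n (k + 1) + stirling1 n k

/-- Signed Stirling numbers of the first kind. -/
def s1 (n l : ℕ) : ℚ := (-1) ^ (n - l) * (stirling1 n l : ℚ)

/-- The exponential generating function `∑ a n * t^n / n!` as a power series over `ℚ`. -/
noncomputable def egf (a : ℕ → ℚ) : PowerSeries ℚ :=
  PowerSeries.mk fun n => a n / (Nat.factorial n : ℚ)

/-- The binomial series `(1+t)^x = ∑ (x)_n t^n / n!` for `x : ℚ`. -/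
noncomputable def onePlusTPow (x : ℚ) : PowerSeries ℚ :=
  egf fun n => ∏ i ∈ Finset.range n, (x - i)

/-- `e^{xt}` as a power series over `ℚ`. -/
noncomputable def expXT (x : ℚ) : PowerSeries ℚ := egf fun n => x ^ n

open Nat

theorem stirling1_eq_stirlingFirst (n l : ℕ) : stirling1 n l = Nat.stirlingFirst n l := by
  induction n generalizing l with
  | zero => cases l <;> rfl
  | succ n ih => cases l <;> simp [stirling1, Nat.stirlingFirst, ih]

theorem s1_eq_zero_of_lt {n l : ℕ} (h : n < l) : s1 n l = 0 := by
  simp [s1, stirling1_eq_stirlingFirst, Nat.stirlingFirst_eq_zero_of_lt h]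

theorem s1_succ_succ (n l : ℕ) : s1 (n + 1) (l + 1) = s1 n l - n * s1 n (l + 1) := by
  rcases le_or_gt n l with h | h
  · rw [s1_eq_zero_of_lt (Nat.lt_succ_of_le h)]
    simp [s1, stirling1_eq_stirlingFirst, Nat.stirlingFirst_succ_succ,
      Nat.stirlingFirst_eq_zero_of_lt (Nat.lt_succ_of_le h)]
  · obtain ⟨d, rfl⟩ := Nat.exists_eq_add_of_lt h
    simp only [s1, stirling1_eq_stirlingFirst, Nat.stirlingFirst_succ_succ,
      show l + d + 1 + 1 - (l + 1) = d + 1 by omega, show l + d + 1 - l = d + 1 by omega,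
      show l + d + 1 - (l + 1) = d by omega]
    push_cast
    ring

open Polynomial in
theorem coeff_descPochhammer (n l : ℕ) : (descPochhammer ℚ n).coeff l = s1 n l := by
  induction n generalizing l with
  | zero =>
    cases l <;> simp [s1, stirling1_eq_stirlingFirst, Nat.stirlingFirst, Polynomial.coeff_one]
  | succ n ih =>
    cases l with
    | zero => simp [coeff_zero_eq_eval_zero, s1, stirling1_eq_stirlingFirst]
    | succ l =>
      rw [descPochhammer_succ_right, ← C_eq_natCast, coeff_mul_X_sub_C, ih, ih, s1_succ_succ]
      ring

theorem sum_s1_mul_pow (n : ℕ) (z : ℚ) :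
    ∑ l ∈ range (n + 1), s1 n l * z ^ l = ∏ i ∈ range n, (z - i) := by
  rw [← descPochhammer_eval_eq_prod_range, Polynomial.eval_eq_sum_range,
    descPochhammer_natDegree]
  simp only [coeff_descPochhammer]

theorem coeff_one_add_X_mul_derivative {R : Type*} [CommSemiring R] (f : R⟦X⟧) (n : ℕ) :
    coeff n ((1 + X) * d⁄dX R f) = (n + 1) * coeff (n + 1) f + n * coeff n f := by
  cases n with
  | zero => rw [add_mul, one_mul, map_add, coeff_zero_X_mul, coeff_derivative]; simp
  | succ n => simp [add_mul, coeff_derivative, coeff_succ_X_mul]; ring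

theorem one_add_X_mul_derivative_log : (1 + X) * d⁄dX ℚ (log ℚ) = 1 := by
  ext n
  cases n with
  | zero => simp [add_mul, deriv_log]
  | succ n => simp [add_mul, deriv_log, coeff_succ_X_mul, pow_succ]

theorem one_add_X_mul_derivative_log_pow (l : ℕ) :
    (1 + X) * d⁄dX ℚ (log ℚ ^ (l + 1)) = C (l + 1 : ℚ) * log ℚ ^ l := by
  simp only [Derivation.leibniz_pow, add_tsub_cancel_right, smul_eq_mul, nsmul_eq_mul, map_add,
    map_one, map_natCast, Nat.cast_add, Nat.cast_one]
  linear_combination ((l + 1 : ℚ⟦X⟧) * log ℚ ^ l) * one_add_X_mul_derivative_log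

theorem coeff_log_pow (l n : ℕ) : coeff n (log ℚ ^ l) = l ! * s1 n l / n ! := by
  induction l generalizing n with
  | zero => cases n <;> simp [coeff_one, s1, stirling1_eq_stirlingFirst]
  | succ l ih =>
    induction n with
    | zero => simp [s1_eq_zero_of_lt]
    | succ n ihn =>
      have h := coeff_one_add_X_mul_derivative (log ℚ ^ (l + 1)) n
      rw [one_add_X_mul_derivative_log_pow, coeff_C_mul, ih, ihn] at h
      rw [s1_succ_succ, eq_div_iff (by positivity)]
      field_simp at h
      push_cast [Nat.factorial_succ] at h ⊢
      linear_combination -h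

theorem hasSubst_smul_log (c : ℚ) : HasSubst (c • log ℚ) := HasSubst.log.smul' c

theorem coeff_smul_log_pow (c : ℚ) (l n : ℕ) :
    coeff n ((c • log ℚ) ^ l) = c ^ l * (l ! * s1 n l / n !) := by
  rw [smul_pow, coeff_smul, coeff_log_pow, smul_eq_mul]

theorem coeff_egf (a : ℕ → ℚ) (n : ℕ) : coeff n (egf a) = a n / n ! := coeff_mk _ _

theorem coeff_subst_smul_log_egf (c : ℚ) (a : ℕ → ℚ) (n : ℕ) :
    coeff n ((egf a).subst (c • log ℚ)) = (∑ l ∈ range (n + 1), s1 n l * c ^ l * a l) / n ! := by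
  rw [coeff_subst' (hasSubst_smul_log c),
    finsum_eq_sum_of_support_subset _ (s := range (n + 1)), sum_div]
  · refine sum_congr rfl fun l _ => ?_
    rw [coeff_smul_log_pow, coeff_egf, smul_eq_mul]
    field_simp
  · refine fun l hl => mem_range.2 (not_le.1 fun hn => hl ?_)
    simp [coeff_smul_log_pow, s1_eq_zero_of_lt (Nat.lt_of_succ_le hn)]

theorem subst_smul_log_expXT (c y : ℚ) : (expXT y).subst (c • log ℚ) = onePlusTPow (c * y) := by
  ext n
  rw [expXT, coeff_subst_smul_log_egf, onePlusTPow, coeff_egf, ← sum_s1_mul_pow]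
  simp only [mul_pow, mul_assoc]

theorem onePlusTPow_natCast (m : ℕ) : onePlusTPow m = (1 + X) ^ m := by
  ext n
  rw [onePlusTPow, coeff_egf, ← descPochhammer_eval_eq_prod_range,
    ← Nat.cast_choose_eq_descPochhammer_div, ← binomialSeries_nat (R := ℚ), binomialSeries_coeff,
    Ring.choose_natCast, smul_eq_mul, mul_one]

theorem exp_eq_expXT_one : exp ℚ = expXT 1 := by
  ext n
  simp [expXT, coeff_egf, coeff_exp]

theorem subst_natCast_smul_log_exp (m : ℕ) : (exp ℚ).subst ((m : ℚ) • log ℚ) = (1 + X) ^ m := by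
  rw [exp_eq_expXT_one, subst_smul_log_expXT, mul_one, onePlusTPow_natCast]

theorem boole_order_k_eq_sum_stirling1_euler_general (k L : ℕ) (hL : 0 < L) (x : ℚ)
    (Blk : ℕ → ℚ) (Ek : ℕ → ℚ → ℚ)
    (hBlk : egf (fun n => 2 ^ k * Blk n) * (1 + (1 + PowerSeries.X) ^ L) ^ k =
      2 ^ k * onePlusTPow x)
    (hEk : ∀ y : ℚ, egf (fun m => Ek m y) * (PowerSeries.exp ℚ + 1) ^ k = 2 ^ k * expXT y)
    (n : ℕ) :
    2 ^ k * Blk n = ∑ l ∈ Finset.range (n + 1), s1 n l * (L : ℚ) ^ l * Ek l (x / L) := by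
  have hxL : (L : ℚ) * (x / L) = x := mul_div_cancel₀ x (by positivity)
  have hsubst := congrArg (substAlgHom (R := ℚ) (hasSubst_smul_log L)) (hEk (x / L))
  simp only [map_mul, map_pow, map_add, map_one, map_ofNat, coe_substAlgHom,
    subst_natCast_smul_log_exp, subst_smul_log_expXT, hxL] at hsubst
  have hne : (1 + (1 + X) ^ L : ℚ⟦X⟧) ^ k ≠ 0 := by
    refine pow_ne_zero k fun h => ?_
    simpa using congrArg constantCoeff h
  have hegf : egf (fun n => 2 ^ k * Blk n) = (egf fun m => Ek m (x / L)).subst ((L : ℚ) • log ℚ) :=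
    mul_right_cancel₀ hne (by rw [hBlk, ← hsubst, add_comm])
  have hcoeff := congrArg (coeff n) hegf
  rw [coeff_egf, coeff_subst_smul_log_egf] at hcoeff
  rwa [div_left_inj' (by positivity)] at hcoeff

theorem boole_order_k_eq_sum_stirling1_euler (k L : ℕ) (hk : 1 ≤ k) (hL : 0 < L) (x : ℚ)
    (Blk : ℕ → ℚ) (Ek : ℕ → ℚ → ℚ)
    (hBlk : egf (fun n => 2 ^ k * Blk n) * (1 + (1 + PowerSeries.X) ^ L) ^ k =
      2 ^ k * onePlusTPow x)
    (hEk : ∀ y : ℚ, egf (fun m => Ek m y) * (PowerSeries.exp ℚ + 1) ^ k = 2 ^ k * expXT y)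
    (n : ℕ) :
    2 ^ k * Blk n = ∑ l ∈ Finset.range (n + 1), s1 n l * (L : ℚ) ^ l * Ek l (x / L) :=
  boole_order_k_eq_sum_stirling1_euler_general k L hL x Blk Ek hBlk hEk n
end

section
/- Define the Boole polynomials of the second kind B̂l_n(x|λ) by the generating function ∑_{n≥0} B̂l_n(x|λ) t^n/n! = (1+t)^{λ+x} / (1 + (1+t)^λ). Then for every m ≥ 0, ∑_{n=0}^{m} B̂l_n(x|λ) S₂(m,n) = (λ^m/2) E_m((λ+x)/λ). -/
open Finset PowerSeries

/-!
Substituting `t = e^u - 1` turns `(1 + t)^a` into `e^{au}`: since `(e^u - 1)^n / n!` is the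
exponential generating function of `m ↦ S₂(m, n)`, this is the expansion
`a^m = ∑ₙ S₂(m, n) a(a-1)⋯(a-n+1)`. Applied to the generating function of `B̂lₙ(x|λ)` it gives
`(∑ₘ (∑ₙ B̂lₙ S₂(m, n)) u^m/m!) (1 + e^{λu}) = e^{(λ+x)u}`, and rescaling `u ↦ λu` in the
generating function of `E_m((λ+x)/λ)` gives the same equation for `λ^m E_m((λ+x)/λ) / 2`.
-/

open scoped Nat

theorem stirling2_eq_stirlingSecond : stirling2 = Nat.stirlingSecond := by
  funext m n
  induction m generalizing n with
  | zero => cases n <;> rfl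
  | succ m ih =>
    cases n with
    | zero => rfl
    | succ n => simp only [stirling2, Nat.stirlingSecond_succ_succ, ih]

theorem sum_prod_sub_mul_stirlingSecond {R : Type*} [CommRing R] (a : R) (m : ℕ) :
    ∑ n ∈ range (m + 1), (∏ i ∈ range n, (a - i)) * (m.stirlingSecond n : R) = a ^ m := by
  induction m with
  | zero => simp
  | succ m ih =>
    set P : ℕ → R := fun n => ∏ i ∈ range n, (a - i)
    have hP : ∀ n, P n * a = P (n + 1) + n * P n := by
      intro n
      simp only [P, prod_range_succ]
      ring
    have hshift :
        ∑ n ∈ range (m + 1), (n + 1 : R) * P (n + 1) * (m.stirlingSecond (n + 1) : R) =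
          ∑ n ∈ range (m + 1), (n : R) * P n * (m.stirlingSecond n : R) := by
      rw [sum_range_succ, sum_range_succ' _ m]
      simp [Nat.stirlingSecond_eq_zero_of_lt]
    calc ∑ n ∈ range (m + 2), P n * ((m + 1).stirlingSecond n : R)
        = ∑ n ∈ range (m + 1), P (n + 1) * ((m + 1).stirlingSecond (n + 1) : R) := by
          simp [sum_range_succ' _ (m + 1)]
      _ = ∑ n ∈ range (m + 1), (P (n + 1) * (m.stirlingSecond n : R) +
            (n + 1 : R) * P (n + 1) * (m.stirlingSecond (n + 1) : R)) := by
          refine sum_congr rfl fun n _ => ?_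
          push_cast [Nat.stirlingSecond_succ_succ]
          ring
      _ = ∑ n ∈ range (m + 1), (P (n + 1) + n * P n) * (m.stirlingSecond n : R) := by
          rw [sum_add_distrib, hshift, ← sum_add_distrib]
          exact sum_congr rfl fun n _ => by ring
      _ = a ^ (m + 1) := by
          simp only [← hP, mul_right_comm _ a, ← sum_mul, pow_succ, ← ih, P]

section ExpSubOne

variable {A : Type*} [CommRing A] [Algebra ℚ A]

theorem derivative_exp_sub_one_pow (n : ℕ) :
    d⁄dX A ((exp A - 1) ^ (n + 1)) =
      C (n + 1 : A) * ((exp A - 1) ^ (n + 1) + (exp A - 1) ^ n) := by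
  rw [derivative_pow, map_sub, derivative_exp A, derivative_one, sub_zero, map_add, map_one,
    map_natCast, Nat.add_sub_cancel]
  push_cast
  ring

theorem factorial_mul_coeff_exp_sub_one_pow (m n : ℕ) :
    (m ! : A) * coeff m ((exp A - 1) ^ n) = n ! * m.stirlingSecond n := by
  induction m generalizing n with
  | zero => cases n <;> simp
  | succ m ih =>
    cases n with
    | zero => simp [coeff_one]
    | succ n =>
      have hc := congrArg (coeff m) (derivative_exp_sub_one_pow (A := A) n)
      rw [coeff_derivative, coeff_C_mul, map_add] at hc
      calc ((m + 1)! : A) * coeff (m + 1) ((exp A - 1) ^ (n + 1))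
          = m ! * (coeff (m + 1) ((exp A - 1) ^ (n + 1)) * (m + 1)) := by
            push_cast [Nat.factorial_succ]; ring
        _ = (n + 1) *
            (m ! * coeff m ((exp A - 1) ^ (n + 1)) + m ! * coeff m ((exp A - 1) ^ n)) := by
            rw [hc]; ring
        _ = (n + 1)! * (m + 1).stirlingSecond (n + 1) := by
            rw [ih, ih]
            push_cast [Nat.factorial_succ, Nat.stirlingSecond_succ_succ]
            ring

end ExpSubOne

theorem egf_injective : Function.Injective egf := by
  intro a b h
  funext n
  have := congrArg (coeff n) h
  simp only [egf, coeff_mk] at this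
  exact (div_left_inj' (by positivity)).mp this

theorem C_mul_egf (c : ℚ) (a : ℕ → ℚ) : C c * egf a = egf fun n => c * a n := by
  ext n
  simp only [egf, coeff_C_mul, coeff_mk, mul_div_assoc]

theorem rescale_egf (c : ℚ) (a : ℕ → ℚ) : rescale c (egf a) = egf fun n => c ^ n * a n := by
  simp only [egf, rescale_mk, mul_div_assoc]

theorem expXT_eq_rescale_exp (a : ℚ) : expXT a = rescale a (exp ℚ) := by
  ext n
  simp [expXT, egf, coeff_exp, div_eq_mul_inv]

theorem coeff_subst_eq_sum_range {R : Type*} [CommRing R] {g : R⟦X⟧}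
    (hg : constantCoeff g = 0) (f : R⟦X⟧) (m : ℕ) :
    coeff m (f.subst g) = ∑ n ∈ range (m + 1), coeff n f * coeff m (g ^ n) := by
  rw [coeff_subst' (HasSubst.of_constantCoeff_zero' hg), finsum_eq_sum_of_support_subset]
  · rfl
  intro n hn
  by_contra hnm
  have hdvd : X ^ n ∣ g ^ n := pow_dvd_pow_of_dvd (X_dvd_iff.mpr hg) n
  exact hn (by simp [X_pow_dvd_iff.mp hdvd m (by simpa using hnm)])

theorem egf_subst_exp_sub_one (a : ℕ → ℚ) :
    (egf a).subst (exp ℚ - 1) =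
      egf fun m => ∑ n ∈ range (m + 1), a n * m.stirlingSecond n := by
  ext m
  rw [coeff_subst_eq_sum_range (by simp), egf, egf, coeff_mk, sum_div]
  refine sum_congr rfl fun n _ => ?_
  have h := factorial_mul_coeff_exp_sub_one_pow (A := ℚ) m n
  rw [coeff_mk]
  field_simp
  linear_combination a n * h

theorem onePlusTPow_subst_exp_sub_one (a : ℚ) :
    (onePlusTPow a).subst (exp ℚ - 1) = expXT a := by
  simp only [onePlusTPow, egf_subst_exp_sub_one, sum_prod_sub_mul_stirlingSecond, expXT]

theorem boole2nd_stirling2_eq_euler (L : ℕ) (hL : 0 < L) (x : ℚ)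
    (Bh : ℕ → ℚ) (E : ℕ → ℚ → ℚ)
    (hBh : egf Bh * (1 + (1 + PowerSeries.X) ^ L) = onePlusTPow ((L : ℚ) + x))
    (hE : ∀ y : ℚ, egf (fun m => E m y) * (PowerSeries.exp ℚ + 1) = 2 * expXT y)
    (m : ℕ) :
    ∑ n ∈ Finset.range (m + 1), Bh n * (stirling2 m n : ℚ) =
      ((L : ℚ) ^ m / 2) * E m (((L : ℚ) + x) / L) := by
  set y := ((L : ℚ) + x) / L
  have hLy : (L : ℚ) * y = L + x := mul_div_cancel₀ _ (by positivity)
  have hsubst : HasSubst (exp ℚ - 1) := HasSubst.of_constantCoeff_zero' (by simp)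
  have hB : egf (fun m => ∑ n ∈ range (m + 1), Bh n * m.stirlingSecond n) * (exp ℚ ^ L + 1) =
      expXT (L + x) := by
    have h := congrArg (subst (exp ℚ - 1)) hBh
    rwa [← coe_substAlgHom hsubst, map_mul, map_add, map_one, map_pow, map_add, map_one,
      coe_substAlgHom, subst_X hsubst, egf_subst_exp_sub_one, onePlusTPow_subst_exp_sub_one,
      add_sub_cancel, add_comm 1] at h
  have hE' : egf (fun m => (L : ℚ) ^ m * E m y) * (exp ℚ ^ L + 1) = 2 * expXT (L + x) := by
    have h := congrArg (rescale (L : ℚ)) (hE y)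
    rwa [map_mul, map_add, map_one, map_mul, map_ofNat, rescale_egf, ← exp_pow_eq_rescale_exp,
      expXT_eq_rescale_exp, rescale_rescale, mul_comm y, hLy, ← expXT_eq_rescale_exp] at h
  have hne : (exp ℚ ^ L + 1 : ℚ⟦X⟧) ≠ 0 := fun h => by
    simpa using congrArg constantCoeff h
  have hegf : egf (fun m => (L : ℚ) ^ m * E m y) =
      egf fun m => 2 * ∑ n ∈ range (m + 1), Bh n * m.stirlingSecond n := by
    refine mul_right_cancel₀ hne ?_
    rw [hE', ← hB, ← C_mul_egf, map_ofNat, mul_assoc]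
  have hm := congrFun (egf_injective hegf) m
  rw [stirling2_eq_stirlingSecond]
  linear_combination -hm / 2
end
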